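/- arXiv:2001.06622 — 2 statements merged into one kernel-verified Lean document; each statement's English description precedes it below -/
import Mathlib

section
/- Let L be a finite-dimensional Lie algebra over a field K of characteristic 0 such that every derivation of L is inner (i.e., for every derivation D of L there exists z ∈ L with D = ad_z). If the center of L is nontrivial, then L is not solvable. -/
/-! If `L` is solvable then `[L, L] ≠ L`, so there are a linear form `g` vanishing on `[L, L]` and
an `x` with `g x = 1`. Let `C` be the centralizer of the hyperplane `ker g`. For `c ∈ C` the map
`y ↦ g y • c` is a derivation, and writing it as `ad w` shows `-w ∈ C` and `⁅x, -w⁆ = c`: thus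
`ad x` maps the finite-dimensional space `C` onto itself, hence injectively. But a nonzero central
element lies in `C` and is killed by `ad x`. -/

open LinearMap (ker)

namespace LieDerivation

variable {R L : Type*} [CommRing R] [LieRing L] [LieAlgebra R L]

def smulRight (g : L →ₗ[R] R) (c : L) (hg : ∀ a b : L, g ⁅a, b⁆ = 0)
    (hc : ∀ a b : L, g a • ⁅b, c⁆ = g b • ⁅a, c⁆) : LieDerivation R L L where
  toLinearMap := g.smulRight c
  leibniz' a b := by simp [hg, hc a b]

@[simp]
lemma smulRight_apply (g : L →ₗ[R] R) (c : L) (hg : ∀ a b : L, g ⁅a, b⁆ = 0)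
    (hc : ∀ a b : L, g a • ⁅b, c⁆ = g b • ⁅a, c⁆) (y : L) : smulRight g c hg hc y = g y • c :=
  rfl

end LieDerivation

namespace LieAlgebra

section CommRing

variable {R L : Type*} [CommRing R] [LieRing L] [LieAlgebra R L]

def centralizer (p : Submodule R L) : Submodule R L where
  carrier := {w | ∀ m ∈ p, ⁅w, m⁆ = 0}
  add_mem' ha hb m hm := by rw [add_lie, ha m hm, hb m hm, add_zero]
  zero_mem' m _ := zero_lie m
  smul_mem' t w hw m hm := by rw [smul_lie, hw m hm, smul_zero]

lemma mem_centralizer_of_mem_center (p : Submodule R L) {z : L} (hz : z ∈ center R L) :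
    z ∈ centralizer p := fun m _ ↦ by
  rw [← lie_skew, (LieModule.mem_maxTrivSubmodule R L L z).mp hz m, neg_zero]

lemma lie_mem_centralizer {p : Submodule R L} {x w : L} (hp : ∀ m ∈ p, ⁅x, m⁆ ∈ p)
    (hw : w ∈ centralizer p) : ⁅x, w⁆ ∈ centralizer p := fun m hm ↦ by
  rw [lie_lie, hw m hm, hw _ (hp m hm), lie_zero, sub_zero]

variable {g : L →ₗ[R] R} {x c : L}

lemma lie_mem_centralizer_ker (hg : ∀ a b : L, g ⁅a, b⁆ = 0) (x : L) :
    ∀ w ∈ centralizer (ker g), ⁅x, w⁆ ∈ centralizer (ker g) :=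
  fun _ ↦ lie_mem_centralizer fun m _ ↦ LinearMap.mem_ker.mpr (hg x m)

lemma lie_eq_smul_lie_of_mem_centralizer_ker (hx : g x = 1)
    (hc : c ∈ centralizer (ker g)) (a : L) : ⁅a, c⁆ = g a • ⁅x, c⁆ := by
  have h : ⁅c, a - g a • x⁆ = 0 := hc _ (by simp [hx])
  rw [lie_sub, lie_smul, sub_eq_zero] at h
  rw [← lie_skew a c, h, ← lie_skew x c, smul_neg]

theorem exists_lie_eq_of_mem_centralizer_ker
    (hinner : ∀ D : LieDerivation R L L, ∃ w : L, D = LieDerivation.ad R L w)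
    (hg : ∀ a b : L, g ⁅a, b⁆ = 0) (hx : g x = 1) (hc : c ∈ centralizer (ker g)) :
    ∃ w ∈ centralizer (ker g), ⁅x, w⁆ = c := by
  have hc' (a b : L) : g a • ⁅b, c⁆ = g b • ⁅a, c⁆ := by
    rw [lie_eq_smul_lie_of_mem_centralizer_ker hx hc a,
      lie_eq_smul_lie_of_mem_centralizer_ker hx hc b, smul_smul, smul_smul, mul_comm]
  obtain ⟨w, hw⟩ := hinner (LieDerivation.smulRight g c hg hc')
  have hw' (y : L) : g y • c = ⁅w, y⁆ := by simpa using congr($hw y)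
  refine ⟨-w, fun m hm ↦ ?_, ?_⟩
  · rw [neg_lie, ← hw' m, LinearMap.mem_ker.mp hm, zero_smul, neg_zero]
  · rw [lie_neg, ← lie_skew, neg_neg, ← hw' x, hx, one_smul]

theorem surjective_ad_restrict_centralizer_ker
    (hinner : ∀ D : LieDerivation R L L, ∃ w : L, D = LieDerivation.ad R L w)
    (hg : ∀ a b : L, g ⁅a, b⁆ = 0) (hx : g x = 1) :
    Function.Surjective ((ad R L x).restrict (lie_mem_centralizer_ker hg x)) := by
  rintro ⟨c, hc⟩
  obtain ⟨w, hw, rfl⟩ := exists_lie_eq_of_mem_centralizer_ker hinner hg hx hc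
  exact ⟨⟨w, hw⟩, rfl⟩

end CommRing

lemma exists_forall_map_lie_eq_zero_of_isSolvable (K L : Type*) [Field K] [LieRing L]
    [LieAlgebra K L] [IsSolvable L] [Nontrivial L] :
    ∃ (g : L →ₗ[K] K) (x : L), g x = 1 ∧ ∀ a b : L, g ⁅a, b⁆ = 0 := by
  obtain ⟨x, -, hx⟩ := SetLike.exists_of_lt (derivedSeries_lt_top_of_solvable K L)
  obtain ⟨g, hg, hgx⟩ := LinearMap.exists_extend_of_notMem
    (0 : (derivedSeries K L 1).toSubmodule →ₗ[K] K) hx 1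
  refine ⟨g, x, hgx, fun a b ↦ ?_⟩
  have hab : ⁅a, b⁆ ∈ derivedSeries K L 1 := by
    rw [derivedSeries_def, derivedSeriesOfIdeal_succ, derivedSeriesOfIdeal_zero]
    exact LieSubmodule.lie_mem_lie (LieSubmodule.mem_top a) (LieSubmodule.mem_top b)
  simpa using congr($hg ⟨_, hab⟩)

end LieAlgebra

theorem stmt_0_general {K L : Type*} [Field K] [LieRing L] [LieAlgebra K L]
    [Module.Finite K L]
    (hinner : ∀ D : LieDerivation K L L, ∃ z : L, D = LieDerivation.ad K L z)
    (hcenter : LieAlgebra.center K L ≠ ⊥) :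
    ¬ LieAlgebra.IsSolvable L := by
  intro _
  obtain ⟨z, hz, hz0⟩ : ∃ z ∈ LieAlgebra.center K L, z ≠ 0 := by
    contrapose! hcenter
    exact (LieSubmodule.eq_bot_iff _).mpr hcenter
  have : Nontrivial L := ⟨⟨z, 0, hz0⟩⟩
  obtain ⟨g, x, hx, hg⟩ := LieAlgebra.exists_forall_map_lie_eq_zero_of_isSolvable K L
  have hinj := LinearMap.injective_iff_surjective.mpr
    (LieAlgebra.surjective_ad_restrict_centralizer_ker hinner hg hx)
  have hzC := LieAlgebra.mem_centralizer_of_mem_center (ker g) hz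
  have hxz : ⁅x, z⁆ = 0 := (LieModule.mem_maxTrivSubmodule K L L z).mp hz x
  have hz_eq := (injective_iff_map_eq_zero _).mp hinj ⟨z, hzC⟩ (Subtype.ext hxz)
  exact hz0 congr(Subtype.val $hz_eq)

/-- If every derivation of a finite-dimensional Lie algebra `L` over a field of
characteristic zero is inner and the center of `L` is nontrivial, then `L` is not solvable. -/
theorem stmt_0 {K L : Type*} [Field K] [CharZero K] [LieRing L] [LieAlgebra K L]
    [Module.Finite K L]
    (hinner : ∀ D : LieDerivation K L L, ∃ z : L, D = LieDerivation.ad K L z)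
    (hcenter : LieAlgebra.center K L ≠ ⊥) :
    ¬ LieAlgebra.IsSolvable L :=
  stmt_0_general hinner hcenter
end

section
/- Let L be a finite-dimensional Lie algebra over ℂ and let D be a derivation of L. Suppose D = S + T is the Jordan–Chevalley decomposition of D as a linear endomorphism of L, i.e., S is a semisimple endomorphism, T is a nilpotent endomorphism, and S and T commute. Then both S and T are derivations of L. -/
/-!
Split `L` into the generalized eigenspaces `L_μ` of `D`. The Leibniz rule for `D` gives
`⁅L_a, L_b⁆ ⊆ L_(a + b)`, and the semisimple part `S` of `D` acts on each `L_μ` as the scalar `μ`.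
Hence for `x ∈ L_a`, `y ∈ L_b` both sides of the Leibniz rule for `S` equal `(a + b) • ⁅x, y⁆`,
and by bilinearity `S` is a derivation. Then so is `T = D - S`.
-/

open Module.End

section Derivation

variable {R L : Type*} [CommRing R] [LieRing L] [LieAlgebra R L] {D : Module.End R L}

theorem sub_smul_one_apply_lie (hD : ∀ x y : L, D ⁅x, y⁆ = ⁅D x, y⁆ + ⁅x, D y⁆)
    (a b : R) (x y : L) :
    (D - (a + b) • 1) ⁅x, y⁆ = ⁅(D - a • 1) x, y⁆ + ⁅x, (D - b • 1) y⁆ := by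
  simp only [LinearMap.sub_apply, LinearMap.add_apply, LinearMap.smul_apply, one_apply, sub_lie,
    lie_sub, smul_lie, lie_smul, hD x y, add_smul]
  abel

theorem pow_sub_smul_one_apply_lie_eq_zero (hD : ∀ x y : L, D ⁅x, y⁆ = ⁅D x, y⁆ + ⁅x, D y⁆)
    {a b : R} {p q : ℕ} {x y : L} (hx : ((D - a • 1) ^ p) x = 0)
    (hy : ((D - b • 1) ^ q) y = 0) :
    ((D - (a + b) • 1) ^ (p + q)) ⁅x, y⁆ = 0 := by
  obtain ⟨n, hn⟩ : ∃ n, p + q = n := ⟨_, rfl⟩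
  rw [hn]
  induction n generalizing p q x y with
  | zero =>
    obtain rfl : p = 0 := by omega
    simp_all
  | succ n ih =>
    obtain _ | p := p
    · simp_all
    obtain _ | q := q
    · simp_all
    have hx' : ((D - a • 1) ^ p) ((D - a • 1) x) = 0 := by rwa [← mul_apply, ← pow_succ]
    have hy' : ((D - b • 1) ^ q) ((D - b • 1) y) = 0 := by rwa [← mul_apply, ← pow_succ]
    rw [pow_succ, mul_apply, sub_smul_one_apply_lie hD, map_add, ih hx' hy (by omega),
      ih hx hy' (by omega), add_zero]

theorem lie_mem_maxGenEigenspace_add (hD : ∀ x y : L, D ⁅x, y⁆ = ⁅D x, y⁆ + ⁅x, D y⁆)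
    {a b : R} {x y : L} (hx : x ∈ D.maxGenEigenspace a) (hy : y ∈ D.maxGenEigenspace b) :
    ⁅x, y⁆ ∈ D.maxGenEigenspace (a + b) := by
  rw [mem_maxGenEigenspace] at hx hy ⊢
  obtain ⟨p, hp⟩ := hx
  obtain ⟨q, hq⟩ := hy
  exact ⟨p + q, pow_sub_smul_one_apply_lie_eq_zero hD hp hq⟩

end Derivation

section AlgClosed

variable {K L : Type*} [Field K] [IsAlgClosed K] [LieRing L] [LieAlgebra K L]
  [FiniteDimensional K L] {D S : Module.End K L}

theorem apply_lie_of_forall_mem_maxGenEigenspace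
    (hD : ∀ x y : L, D ⁅x, y⁆ = ⁅D x, y⁆ + ⁅x, D y⁆)
    (hS : ∀ μ : K, ∀ x ∈ D.maxGenEigenspace μ, S x = μ • x) (x y : L) :
    S ⁅x, y⁆ = ⁅S x, y⁆ + ⁅x, S y⁆ := by
  have hL : ∀ z : L, z ∈ ⨆ μ : K, D.maxGenEigenspace μ := by
    simp [iSup_maxGenEigenspace_eq_top]
  induction hL x using Submodule.iSup_induction' with
  | mem a x hx =>
    induction hL y using Submodule.iSup_induction' with
    | mem b y hy =>
      rw [hS _ _ (lie_mem_maxGenEigenspace_add hD hx hy), hS a x hx, hS b y hy, smul_lie,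
        lie_smul, add_smul]
    | zero => simp
    | add _ _ _ _ h h' => simp only [lie_add, map_add, h, h']; abel
  | zero => simp
  | add _ _ _ _ h h' => simp only [add_lie, map_add, h, h']; abel

theorem apply_lie_of_isSemisimple_of_isNilpotent_sub
    (hD : ∀ x y : L, D ⁅x, y⁆ = ⁅D x, y⁆ + ⁅x, D y⁆)
    (hS : S.IsSemisimple) (hDS : Commute D S) (hN : IsNilpotent (D - S)) (x y : L) :
    S ⁅x, y⁆ = ⁅S x, y⁆ + ⁅x, S y⁆ :=
  apply_lie_of_forall_mem_maxGenEigenspace hD (fun _ _ hx ↦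
    apply_eq_of_mem_of_comm_of_isFinitelySemisimple_of_isNil hx hDS hS.isFinitelySemisimple hN) x y

end AlgClosed

/-- If `D = S + T` is the Jordan–Chevalley decomposition of a derivation `D` of a
finite-dimensional complex Lie algebra (with `S` semisimple, `T` nilpotent, `S` and `T`
commuting), then both `S` and `T` are derivations. -/
theorem stmt_4 {L : Type*} [LieRing L] [LieAlgebra ℂ L] [Module.Finite ℂ L]
    (D S T : Module.End ℂ L)
    (hD : ∀ x y : L, D ⁅x, y⁆ = ⁅D x, y⁆ + ⁅x, D y⁆)
    (hS : S.IsSemisimple) (hT : IsNilpotent T) (hST : Commute S T)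
    (hsum : D = S + T) :
    (∀ x y : L, S ⁅x, y⁆ = ⁅S x, y⁆ + ⁅x, S y⁆) ∧
    (∀ x y : L, T ⁅x, y⁆ = ⁅T x, y⁆ + ⁅x, T y⁆) := by
  subst hsum
  have hSder := apply_lie_of_isSemisimple_of_isNilpotent_sub hD hS
    ((Commute.refl S).add_left hST.symm) (by rwa [add_sub_cancel_left])
  refine ⟨hSder, fun x y ↦ ?_⟩
  have hSTder := hD x y
  simp only [LinearMap.add_apply, add_lie, lie_add, hSder x y] at hSTder
  exact add_left_cancel (a := ⁅S x, y⁆ + ⁅x, S y⁆) (by rw [hSTder]; abel)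
end
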